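/- Let G be a finite connected bipartite simple graph with a perfect matching M such that no special subset of V(G) with respect to M induces an elementary subgraph of G. Then G contains no M-alternating cycle. -/

import Mathlib

open SimpleGraph

/-- `S` is a vertex cover of `G`: every edge has at least one endpoint in `S`. -/
def IsVertexCover {V : Type*} (G : SimpleGraph V) (S : Set V) : Prop :=
  ∀ ⦃u v : V⦄, G.Adj u v → u ∈ S ∨ v ∈ S

/-- `S` is a minimum vertex cover of `G`. -/
def IsMinVertexCover {V : Type*} (G : SimpleGraph V) (S : Set V) : Prop :=
  _root_.IsVertexCover G S ∧ ∀ T : Set V, _root_.IsVertexCover G T → S.ncard ≤ T.ncard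

/-- `(A, B)` is a bipartition of `G`. -/
def IsBipartition {V : Type*} (G : SimpleGraph V) (A B : Set V) : Prop :=
  Disjoint A B ∧ A ∪ B = Set.univ ∧
    ∀ ⦃u v : V⦄, G.Adj u v → (u ∈ A ∧ v ∈ B) ∨ (u ∈ B ∧ v ∈ A)

/-- The edge `e` belongs to some perfect matching of `G`. -/
def EdgeInSomePM {V : Type*} (G : SimpleGraph V) (e : Sym2 V) : Prop :=
  ∃ M : G.Subgraph, M.IsPerfectMatching ∧ e ∈ M.edgeSet

/-- A graph is elementary if it is connected and every edge belongs
to some perfect matching. -/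
def IsElementary {W : Type*} (H : SimpleGraph W) : Prop :=
  H.Connected ∧ ∀ e ∈ H.edgeSet, EdgeInSomePM H e

/-- `S` is a special subset with respect to the perfect matching `M`:
the union of the endpoints of at least two edges of `M`, equivalently
`|S| ≥ 4` and `S` is closed under taking `M`-partners. -/
def IsSpecialSubset {V : Type*} (G : SimpleGraph V) (M : G.Subgraph) (S : Set V) : Prop :=
  4 ≤ S.ncard ∧ ∀ ⦃v w : V⦄, v ∈ S → M.Adj v w → w ∈ S

/-- `p` is an `M`-alternating cycle: a cycle whose edges alternately belong
to `M` and to `E(G) \ M`. -/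
def IsAlternatingCycle {V : Type*} (G : SimpleGraph V) (M : G.Subgraph) {v : V}
    (p : G.Walk v v) : Prop :=
  p.IsCycle ∧ Even p.length ∧
    ((∀ (i : ℕ) (h : i < p.edges.length), (p.edges.get ⟨i, h⟩ ∈ M.edgeSet ↔ Even i)) ∨
     (∀ (i : ℕ) (h : i < p.edges.length), (p.edges.get ⟨i, h⟩ ∈ M.edgeSet ↔ Odd i)))

/-- The minimum vertex cover number of `G`. -/
noncomputable def mvc {V : Type*} (G : SimpleGraph V) : ℕ :=
  sInf {n | ∃ S : Set V, _root_.IsVertexCover G S ∧ S.ncard = n}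


/-- pairing function on positions of a cycle of even length, chord (0,j). -/
def pf (j i : ℕ) : ℕ :=
  if i = 0 then j else if i = j then 0
  else if i < j then (if i % 2 = 0 then i - 1 else i + 1)
  else (if i % 2 = 0 then i + 1 else i - 1)

lemma pf_lt {j len i : ℕ} (hj : j % 2 = 1) (hlen : len % 2 = 0) (hjl : j < len)
    (hi : i < len) : pf j i < len := by
  simp only [pf]; split_ifs <;> omega

set_option maxHeartbeats 1000000 in
lemma pf_invol {j len i : ℕ} (hj : j % 2 = 1) (hlen : len % 2 = 0) (hjl : j < len)
    (hi : i < len) : pf j (pf j i) = i := by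
  simp only [pf]; split_ifs <;> first | omega | exact absurd trivial (by assumption) | exact (by assumption : False).elim

lemma pf_cases {j len i : ℕ} (hj : j % 2 = 1) (hlen : len % 2 = 0) (hjl : j < len)
    (hi : i < len) :
    (i = 0 ∧ pf j i = j) ∨ (i = j ∧ pf j i = 0) ∨ pf j i = i + 1 ∨ i = pf j i + 1 := by
  simp only [pf]; split_ifs <;> omega

lemma pf_zero (j : ℕ) : pf j 0 = j := by simp [pf]

lemma walk_support_get {V : Type*} {G : SimpleGraph V} {u v : V} (p : G.Walk u v) :
    ∀ (i : ℕ) (h : i < p.support.length), p.support.get ⟨i, h⟩ = p.getVert i := by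
  induction p with
  | nil => intro i h; simp [Walk.support_nil] at h; subst h; simp [Walk.getVert_zero]
  | cons ha q ih => intro i h; cases i with
    | zero => simp [Walk.support_cons, Walk.getVert_zero]
    | succ n =>
      simp only [Walk.support_cons, List.get_cons_succ, Walk.getVert_cons_succ]
      exact ih n _

lemma walk_edges_get {V : Type*} {G : SimpleGraph V} {u v : V} (p : G.Walk u v) :
    ∀ (i : ℕ) (h : i < p.edges.length), p.edges.get ⟨i, h⟩ = s(p.getVert i, p.getVert (i+1)) := by
  induction p with
  | nil => intro i h; simp [Walk.edges_nil] at h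
  | cons ha q ih => intro i h; cases i with
    | zero => simp [Walk.edges_cons, Walk.getVert_zero, Walk.getVert_cons_succ]
    | succ n =>
      simp only [Walk.edges_cons, List.get_cons_succ, Walk.getVert_cons_succ]
      exact ih n _

lemma walk_support_getElem {V : Type*} {G : SimpleGraph V} {u v : V} (p : G.Walk u v)
    (i : ℕ) (h : i < p.support.length) : p.support[i]'h = p.getVert i := by
  have := walk_support_get p i h
  simpa [List.get_eq_getElem] using this

lemma cycle_getVert_inj {V : Type*} {G : SimpleGraph V} {v : V} {p : G.Walk v v}
    (hp : p.IsCycle) {i k : ℕ} (hi : i < p.length) (hk : k < p.length)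
    (h : p.getVert i = p.getVert k) : i = k := by
  have hlen : p.support.length = p.length + 1 := p.length_support
  have hlt : p.support.tail.length = p.length := by simp [List.length_tail, hlen]
  have key : ∀ a b : ℕ, a < p.length → b < p.length →
      p.getVert (a+1) = p.getVert (b+1) → a = b := by
    intro a b ha hb hab
    have h1 : ∀ c : ℕ, (hc : c < p.length) →
        p.support.tail[c]'(by omega) = p.getVert (c+1) := by
      intro c hc
      rw [List.getElem_tail, walk_support_getElem]
    have e1 : p.support.tail[a]'(by omega) = p.support.tail[b]'(by omega) := by
      rw [h1 a ha, h1 b hb]; exact hab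
    exact hp.support_nodup.getElem_inj_iff.mp e1
  have hv0 : p.getVert 0 = p.getVert p.length := by
    rw [p.getVert_zero, p.getVert_length]
  have h3 : 3 ≤ p.length := hp.three_le_length
  set i' := if i = 0 then p.length - 1 else i - 1 with hi'
  set k' := if k = 0 then p.length - 1 else k - 1 with hk'
  have hgi : p.getVert (i'+1) = p.getVert i := by
    rw [hi']; split_ifs with h0
    · rw [show p.length - 1 + 1 = p.length by omega, ← hv0, h0]
    · rw [show i - 1 + 1 = i by omega]
  have hgk : p.getVert (k'+1) = p.getVert k := by
    rw [hk']; split_ifs with h0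
    · rw [show p.length - 1 + 1 = p.length by omega, ← hv0, h0]
    · rw [show k - 1 + 1 = k by omega]
  have hik := key i' k' (by rw [hi']; split_ifs <;> omega)
    (by rw [hk']; split_ifs <;> omega) (by rw [hgi, hgk, h])
  rw [hi', hk'] at hik
  split_ifs at hik <;> omega

lemma bip_parity {V : Type*} {G : SimpleGraph V} {A : Set V}
    (hD : ∀ ⦃x y : V⦄, G.Adj x y → (x ∈ A ↔ y ∉ A)) {u w : V} (q : G.Walk u w) :
    ∀ i, i ≤ q.length → (q.getVert i ∈ A ↔ (Even i ↔ u ∈ A)) := by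
  intro i
  induction i with
  | zero => intro _; simp [q.getVert_zero]
  | succ n ih =>
    intro hn
    have h1 := ih (by omega)
    have h2 := hD (q.adj_getVert_succ (by omega : n < q.length))
    rw [Nat.even_add_one]
    tauto

lemma length_rotate' {V : Type*} [DecidableEq V] {G : SimpleGraph V} {v u : V}
    (p : G.Walk v v) (h : u ∈ p.support) : (p.rotate u h).length = p.length := by
  have h1 := congr_arg Walk.length (p.take_spec h)
  rw [Walk.length_append] at h1
  show ((p.dropUntil u h).append (p.takeUntil u h)).length = p.length
  rw [Walk.length_append]; omega

lemma mem_support_rotate {V : Type*} [DecidableEq V] {G : SimpleGraph V} {v u x : V}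
    (p : G.Walk v v) (h : u ∈ p.support) : x ∈ (p.rotate u h).support ↔ x ∈ p.support := by
  conv_rhs => rw [← p.take_spec h]
  show x ∈ ((p.dropUntil u h).append (p.takeUntil u h)).support ↔ _
  rw [Walk.mem_support_append_iff, Walk.mem_support_append_iff, or_comm]

/-- If no special subset of `V(G)` with respect to the perfect matching `M`
induces an elementary subgraph, then `G` contains no `M`-alternating cycle. -/
theorem stmt6 {V : Type*} [Fintype V] (G : SimpleGraph V)
    (hbip : ∃ A B : Set V, IsBipartition G A B) (hconn : G.Connected)
    (M : G.Subgraph) (hM : M.IsPerfectMatching)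
    (hmax : ∀ S : Set V, IsSpecialSubset G M S → ¬ IsElementary (G.induce S)) :
    ∀ (v : V) (p : G.Walk v v), ¬ IsAlternatingCycle G M p := by
  classical
  rintro v p ⟨hcyc, heven, halt⟩
  obtain ⟨A, B, hdisj, huniv, hadjAB⟩ := hbip
  have hDA : ∀ ⦃x y : V⦄, G.Adj x y → (x ∈ A ↔ y ∉ A) := by
    intro x y hxy
    rcases hadjAB hxy with ⟨hx, hy⟩ | ⟨hx, hy⟩
    · exact iff_of_true hx (Set.disjoint_right.mp hdisj hy)
    · exact iff_of_false (fun hxA => Set.disjoint_left.mp hdisj hxA hx) (fun hh => hh hy)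
  have hDB : ∀ ⦃x y : V⦄, G.Adj x y → (x ∈ B ↔ y ∉ B) := by
    intro x y hxy
    rcases hadjAB hxy with ⟨hx, hy⟩ | ⟨hx, hy⟩
    · exact iff_of_false (fun hxB => Set.disjoint_left.mp hdisj hx hxB) (fun hh => hh hy)
    · exact iff_of_true hx (Set.disjoint_left.mp hdisj hy)
  set S : Set V := p.toSubgraph.verts with hSdef
  have hmemS : ∀ x, x ∈ S ↔ x ∈ p.support := fun x => p.mem_verts_toSubgraph
  have h3 : 3 ≤ p.length := hcyc.three_le_length
  have hplen2 : p.length % 2 = 0 := Nat.even_iff.mp heven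
  have h4 : 4 ≤ p.length := by omega
  have hgvS : ∀ m : ℕ, m ≤ p.length → p.getVert m ∈ S := fun m hm =>
    (hmemS _).mpr (Walk.mem_support_iff_exists_getVert.mpr ⟨m, rfl, hm⟩)
  -- alternation in getVert form
  have halt' : ∃ r : ℕ, r < 2 ∧ ∀ (k : ℕ), k < p.length →
      (s(p.getVert k, p.getVert (k+1)) ∈ M.edgeSet ↔ k % 2 = r) := by
    have hle : p.edges.length = p.length := p.length_edges
    rcases halt with hA | hA
    · refine ⟨0, by omega, fun k hk => ?_⟩
      have := hA k (by omega)
      rw [walk_edges_get] at this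
      rw [this, Nat.even_iff]
    · refine ⟨1, by omega, fun k hk => ?_⟩
      have := hA k (by omega)
      rw [walk_edges_get] at this
      rw [this, Nat.odd_iff]
  obtain ⟨r, hr2, hr⟩ := halt'
  apply hmax S
  · constructor
    · -- 4 ≤ S.ncard
      have hne : ∀ i k : ℕ, i < 4 → k < 4 → i ≠ k → p.getVert i ≠ p.getVert k :=
        fun i k hi hk hik he => hik (cycle_getVert_inj hcyc (by omega) (by omega) he)
      have h01 := hne 0 1 (by omega) (by omega) (by omega)
      have h02 := hne 0 2 (by omega) (by omega) (by omega)
      have h03 := hne 0 3 (by omega) (by omega) (by omega)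
      have h12 := hne 1 2 (by omega) (by omega) (by omega)
      have h13 := hne 1 3 (by omega) (by omega) (by omega)
      have h23 := hne 2 3 (by omega) (by omega) (by omega)
      have hT : ({p.getVert 0, p.getVert 1, p.getVert 2, p.getVert 3} : Set V).ncard = 4 := by
        rw [Set.ncard_insert_of_notMem
              (by intro hmem; rcases hmem with h | h | h; exacts [h01 h, h02 h, h03 h])
              (Set.toFinite _),
            Set.ncard_insert_of_notMem
              (by intro hmem; rcases hmem with h | h; exacts [h12 h, h13 h])
              (Set.toFinite _),
            Set.ncard_pair h23]
      have hsub : ({p.getVert 0, p.getVert 1, p.getVert 2, p.getVert 3} : Set V) ⊆ S := by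
        intro x hx
        rcases hx with h | h | h | h <;> (subst h; exact hgvS _ (by omega))
      calc 4 = ({p.getVert 0, p.getVert 1, p.getVert 2, p.getVert 3} : Set V).ncard := hT.symm
        _ ≤ S.ncard := Set.ncard_le_ncard hsub (Set.toFinite S)
    · -- M-closure
      intro x y hx hxy
      obtain ⟨i0, hgi, hil⟩ := Walk.mem_support_iff_exists_getVert.mp ((hmemS x).mp hx)
      set i : ℕ := if i0 = p.length then 0 else i0 with hidef
      have hilt : i < p.length := by rw [hidef]; split_ifs <;> omega
      have hgx : p.getVert i = x := by
        rw [hidef]; split_ifs with h0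
        · rw [← hgi, h0, Walk.getVert_zero, p.getVert_length]
        · exact hgi
      have hpartner : ∃ z, s(x, z) ∈ M.edgeSet ∧ z ∈ p.support := by
        by_cases hpar : i % 2 = r
        · refine ⟨p.getVert (i+1), ?_, Walk.mem_support_iff_exists_getVert.mpr ⟨i+1, rfl, by omega⟩⟩
          rw [← hgx]
          exact (hr i hilt).mpr hpar
        · rcases Nat.eq_zero_or_pos i with hi0 | hi0
          · -- i = 0, use edge p.length - 1
            have hrr : (p.length - 1) % 2 = r := by omega
            refine ⟨p.getVert (p.length - 1), ?_,
              Walk.mem_support_iff_exists_getVert.mpr ⟨p.length - 1, rfl, by omega⟩⟩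
            have hx0 : p.getVert p.length = x := by
              rw [← hgx, hi0, p.getVert_zero, p.getVert_length]
            have he := (hr (p.length - 1) (by omega)).mpr hrr
            rw [show p.length - 1 + 1 = p.length by omega, hx0] at he
            rwa [Sym2.eq_swap]
          · -- use edge i - 1
            have hrr : (i - 1) % 2 = r := by omega
            refine ⟨p.getVert (i - 1), ?_,
              Walk.mem_support_iff_exists_getVert.mpr ⟨i - 1, rfl, by omega⟩⟩
            have he := (hr (i - 1) (by omega)).mpr hrr
            rw [show i - 1 + 1 = i by omega, hgx] at he
            rwa [Sym2.eq_swap]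
      obtain ⟨z, hz, hzs⟩ := hpartner
      obtain ⟨z', _, huniq⟩ := hM.1 (hM.2 x)
      have h1 : z = z' := huniq z (Subgraph.mem_edgeSet.mp hz)
      have h2 : y = z' := huniq y hxy
      rw [hmemS, h2, ← h1]
      exact hzs
  · constructor
    · exact p.toSubgraph_connected.induce_verts
    · intro e he
      obtain ⟨⟨a, b⟩, rfl⟩ := e.exists_rep
      rw [SimpleGraph.mem_edgeSet] at he
      have hadjuw : G.Adj (a : V) (b : V) := he
      have hus : (a : V) ∈ p.support := (hmemS _).mp a.2
      set c := p.rotate _ hus with hcdef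
      have hccyc : c.IsCycle := hcyc.rotate hus
      have hclen : c.length = p.length := length_rotate' p hus
      have hcsup : ∀ x, x ∈ c.support ↔ x ∈ p.support := fun x => mem_support_rotate p hus
      have hgv0 : c.getVert 0 = (a : V) := c.getVert_zero
      have hws : (b : V) ∈ c.support := (hcsup _).mpr ((hmemS _).mp b.2)
      obtain ⟨j, hgj, hjle⟩ := Walk.mem_support_iff_exists_getVert.mp hws
      have hune : (a : V) ≠ (b : V) := hadjuw.ne
      have hj0 : j ≠ 0 := by
        intro h0; apply hune; rw [← hgj, h0, c.getVert_zero]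
      have hjlen : j < c.length := by
        rcases Nat.lt_or_ge j c.length with h | h
        · exact h
        · exfalso; apply hune
          rw [← hgj, c.getVert_of_length_le h]
      have hlen0 : c.length % 2 = 0 := by omega
      have hmemc : ∀ m : ℕ, m ≤ c.length → c.getVert m ∈ S := fun m hm =>
        (hmemS _).mpr ((hcsup _).mp (Walk.mem_support_iff_exists_getVert.mpr ⟨m, rfl, hm⟩))
      -- parity of j
      have hjodd : j % 2 = 1 := by
        have hnotev : ¬ Even j := by
          have hab : (a : V) ∈ A ∪ B := by rw [huniv]; trivial
          rcases hab with hA' | hB'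
          · have hp1 := bip_parity hDA c j hjle
            rw [hgj] at hp1
            have hb := (hDA hadjuw).mp hA'
            tauto
          · have hp1 := bip_parity hDB c j hjle
            rw [hgj] at hp1
            have hb := (hDB hadjuw).mp hB'
            tauto
        exact Nat.odd_iff.mp (Nat.not_even_iff_odd.mp hnotev)
      -- membership of getVerts of c in S
      have hSm : ∀ m : ℕ, m < c.length → c.getVert m ∈ S := fun m hm => hmemc m (by omega)
      -- the matching
      refine ⟨⟨Set.univ,
        fun x y => ∃ i, i < c.length ∧ (x : V) = c.getVert i ∧ (y : V) = c.getVert (pf j i),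
        ?_, ?_, ?_⟩, ?_, ?_⟩
      · -- adj_sub
        rintro x y ⟨i, hi, hx, hy⟩
        show G.Adj (x : V) (y : V)
        rcases pf_cases hjodd hlen0 hjlen hi with ⟨h0, hpj⟩ | ⟨hij, hp0⟩ | hsucc | hpred
        · rw [hx, hy, hpj, h0, hgv0, hgj]; exact hadjuw
        · rw [hx, hy, hp0, hij, hgv0, hgj]; exact hadjuw.symm
        · rw [hx, hy, hsucc]; exact c.adj_getVert_succ hi
        · rw [hx, hy]
          conv_lhs => rw [hpred]
          exact (c.adj_getVert_succ (by
            have := pf_lt hjodd hlen0 hjlen hi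
            omega)).symm
      · -- edge_vert
        rintro x y -
        trivial
      · -- symm
        refine ⟨?_⟩
        rintro x y ⟨i, hi, hx, hy⟩
        exact ⟨pf j i, pf_lt hjodd hlen0 hjlen hi, hy, by rw [pf_invol hjodd hlen0 hjlen hi]; exact hx⟩
      · -- perfect matching
        rw [Subgraph.isPerfectMatching_iff]
        intro x
        obtain ⟨i0, hgx0, hi0le⟩ := Walk.mem_support_iff_exists_getVert.mp
          ((hcsup _).mpr ((hmemS _).mp x.2))
        set i : ℕ := if i0 = c.length then 0 else i0 with hidef
        have hilt : i < c.length := by rw [hidef]; split_ifs <;> omega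
        have hgx : c.getVert i = (x : V) := by
          rw [hidef]; split_ifs with h0
          · rw [← hgx0, h0, c.getVert_zero, c.getVert_length]
          · exact hgx0
        refine ⟨⟨c.getVert (pf j i), hSm _ (pf_lt hjodd hlen0 hjlen hilt)⟩,
          ⟨i, hilt, hgx.symm, rfl⟩, ?_⟩
        rintro y ⟨i2, hi2, hx2, hy2⟩
        have hii : i2 = i := cycle_getVert_inj hccyc hi2 hilt (by rw [← hx2, hgx])
        apply Subtype.ext
        rw [hy2, hii]
      · -- the edge is in the matching
        rw [Subgraph.mem_edgeSet]
        exact ⟨0, by omega, by rw [hgv0], by rw [pf_zero, hgj]⟩
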